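/- For 0 ≤ ε ≤ 1 and C ≥ 0, the operator D₀ + ((C − ε|p|)/2)(β+1) on L²(ℝ³, ℂ⁴) is invertible, and one has the operator bound (D₀ + ((C−ε|p|)/2)(β+1))^{-1} ≤ (1/2)[(α·p+β+i√C)^{-1} + (α·p+β−i√C)^{-1}] + 8ε(1+C)/|p|. -/

import Mathlib

open MeasureTheory Matrix

noncomputable section

/-- The three Pauli matrices. -/
def pauli : Fin 3 → Matrix (Fin 2) (Fin 2) ℂ :=
  ![!![0, 1; 1, 0], !![0, -Complex.I; Complex.I, 0], !![1, 0; 0, -1]]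

/-- The Dirac matrices `α_j` in the standard representation. -/
def diracAlpha (j : Fin 3) : Matrix (Fin 4) (Fin 4) ℂ :=
  Matrix.reindex finSumFinEquiv finSumFinEquiv
    (Matrix.fromBlocks (0 : Matrix (Fin 2) (Fin 2) ℂ) (pauli j) (pauli j) 0)

/-- The Dirac matrix `β` in the standard representation. -/
def diracBeta : Matrix (Fin 4) (Fin 4) ℂ :=
  Matrix.reindex finSumFinEquiv finSumFinEquiv
    (Matrix.fromBlocks (1 : Matrix (Fin 2) (Fin 2) ℂ) 0 0 (-1 : Matrix (Fin 2) (Fin 2) ℂ))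

/-- The Fourier symbol `α·p + β` of the free Dirac operator `D₀`. -/
def diracSymbol (p : EuclideanSpace ℝ (Fin 3)) : Matrix (Fin 4) (Fin 4) ℂ :=
  (∑ j : Fin 3, (p j : ℂ) • diracAlpha j) + diracBeta
open scoped ComplexOrder

/-- The Fourier symbol of `D₀ + ((C - ε|p|)/2)(β+1)`. -/
def shiftedSymbolEps (C ε : ℝ) (p : EuclideanSpace ℝ (Fin 3)) : Matrix (Fin 4) (Fin 4) ℂ :=
  diracSymbol p + (((C - ε * ‖p‖) / 2 : ℝ) : ℂ) • (diracBeta + 1)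

/-- The Fourier symbol of `(1/2)[(α·p+β+i√C)⁻¹ + (α·p+β−i√C)⁻¹]`. -/
def avgResolventSymbol (C : ℝ) (p : EuclideanSpace ℝ (Fin 3)) : Matrix (Fin 4) (Fin 4) ℂ :=
  (1 / 2 : ℂ) • ((diracSymbol p + (Complex.I * (Real.sqrt C : ℂ)) • 1)⁻¹ +
    (diracSymbol p - (Complex.I * (Real.sqrt C : ℂ)) • 1)⁻¹)


/-! The matrices `α·v + aβ` square to `|v|² + a²` (the anticommutation relations of `α_j, β`),
so `(α·v + aβ + b)⁻¹ = (|v|² + a² - b²)⁻¹ (α·v + aβ - b)`. This computes both inverses in the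
claim explicitly: the average of the resolvents is `D₀ / (p² + 1 + C)`, and the difference to be
shown nonnegative is again of the form `α·(u p) + (u - κ)β + (r + κ)` with real `u, κ`. Such a
Hermitian matrix is `≥ 0` as soon as `(r + κ)² ≥ u²p² + (u - κ)²`, a scalar inequality which
follows from `p² + 1 + C - ε|p| ≥ (p² + 1)/2`. -/

section

variable {n 𝕜 : Type*} [Fintype n] [DecidableEq n]

theorem Matrix.inv_add_smul_one_of_mul_self [Field 𝕜] {H : Matrix n n 𝕜} {s : 𝕜}
    (hH : H * H = s • 1) {b : 𝕜} (hb : s - b ^ 2 ≠ 0) :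
    IsUnit (H + b • 1) ∧ (H + b • 1)⁻¹ = (s - b ^ 2)⁻¹ • (H - b • 1) := by
  have hsq : (H + b • 1) * (H - b • 1) = (s - b ^ 2) • 1 := by
    simp only [add_mul, mul_sub, hH, Matrix.smul_mul, Matrix.mul_smul, one_mul, mul_one, smul_smul,
      sub_smul, pow_two]
    abel
  have h : (H + b • 1) * ((s - b ^ 2)⁻¹ • (H - b • 1)) = 1 := by
    rw [Matrix.mul_smul, hsq, smul_smul, inv_mul_cancel₀ hb, one_smul]
  exact ⟨IsUnit.of_mul_eq_one _ h, Matrix.inv_eq_right_inv h⟩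

theorem Matrix.IsHermitian.posSemidef_add_smul_one [RCLike 𝕜] {H : Matrix n n 𝕜}
    (hH : H.IsHermitian) {m w : ℝ} (hm : 0 ≤ m) (hHH : H * H = ((m ^ 2 : ℝ) : 𝕜) • 1)
    (hmw : m ≤ w) : (H + (w : 𝕜) • 1).PosSemidef := by
  have hsplit : H + (w : 𝕜) • 1 = (H + (m : 𝕜) • 1) + (w - m) • (1 : Matrix n n 𝕜) := by
    rw [← RCLike.real_smul_eq_coe_smul, ← RCLike.real_smul_eq_coe_smul, sub_smul]; abel
  rw [hsplit]
  refine .add ?_ (.smul .one (sub_nonneg.2 hmw))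
  rcases hm.eq_or_lt with rfl | hm
  · have : Hᴴ * H = 0 := by simpa [hH.eq] using hHH
    simpa [Matrix.conjTranspose_mul_self_eq_zero.1 this] using Matrix.PosSemidef.zero
  · set P := H + (m : 𝕜) • 1
    -- `H² = m²` gives `P² = 2m P`, so `P = (2m)⁻¹ Pᴴ P`.
    have hP : Pᴴ * P = (2 * m) • P := by
      have hPH : Pᴴ = P := by simp [P, hH.eq]
      rw [hPH]
      simp only [P, add_mul, mul_add, hHH, Matrix.smul_mul, Matrix.mul_smul, one_mul, mul_one,
        smul_smul, smul_add]
      push_cast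
      module
    have : P = (2 * m)⁻¹ • (Pᴴ * P) := by
      rw [hP, smul_smul, inv_mul_cancel₀ (by positivity), one_smul]
    rw [this]
    exact (Matrix.posSemidef_conjTranspose_mul_self P).smul (by positivity)

end

open Complex

def diracElem (v : EuclideanSpace ℝ (Fin 3)) (a : ℂ) : Matrix (Fin 4) (Fin 4) ℂ :=
  ∑ j : Fin 3, (v j : ℂ) • diracAlpha j + a • diracBeta

theorem diracElem_eq_of (v : EuclideanSpace ℝ (Fin 3)) (a : ℂ) :
    diracElem v a = !![a, 0, ↑(v 2), v 0 - I * v 1;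
                       0, a, v 0 + I * v 1, -↑(v 2);
                       ↑(v 2), v 0 - I * v 1, -a, 0;
                       v 0 + I * v 1, -↑(v 2), 0, -a] := by
  ext i j
  fin_cases i <;> fin_cases j <;>
    simp [diracElem, diracAlpha, diracBeta, pauli, Fin.sum_univ_three, finSumFinEquiv,
      Fin.addCases] <;> ring

theorem diracElem_mul_self (v : EuclideanSpace ℝ (Fin 3)) (a : ℂ) :
    diracElem v a * diracElem v a = ((‖v‖ ^ 2 : ℝ) + a ^ 2 : ℂ) • 1 := by
  rw [diracElem_eq_of, EuclideanSpace.norm_sq_eq, Fin.sum_univ_three]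
  ext i j
  fin_cases i <;> fin_cases j <;>
    simp [Matrix.mul_apply, Fin.sum_univ_four] <;> ring_nf <;> simp [I_sq]

theorem diracElem_isHermitian (v : EuclideanSpace ℝ (Fin 3)) (a : ℝ) :
    (diracElem v a).IsHermitian := by
  rw [diracElem_eq_of]
  ext i j
  fin_cases i <;> fin_cases j <;> simp [Complex.ext_iff]

theorem ofReal_smul_diracElem (c : ℝ) (v : EuclideanSpace ℝ (Fin 3)) (a : ℂ) :
    (c : ℂ) • diracElem v a = diracElem (c • v) (c * a) := by
  simp only [diracElem, smul_add, Finset.smul_sum, smul_smul, PiLp.smul_apply, smul_eq_mul,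
    Complex.ofReal_mul]

theorem diracElem_sub_diracElem (v w : EuclideanSpace ℝ (Fin 3)) (a b : ℂ) :
    diracElem v a - diracElem w b = diracElem (v - w) (a - b) := by
  simp only [diracElem, PiLp.sub_apply, ofReal_sub, sub_smul, Finset.sum_sub_distrib]
  abel

theorem diracElem_add_smul_one_posSemidef (v : EuclideanSpace ℝ (Fin 3)) {a w : ℝ} (hw : 0 ≤ w)
    (h : ‖v‖ ^ 2 + a ^ 2 ≤ w ^ 2) : (diracElem v a + (w : ℂ) • 1).PosSemidef := by
  refine (diracElem_isHermitian v a).posSemidef_add_smul_one (Real.sqrt_nonneg _) ?_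
    (Real.sqrt_le_iff.2 ⟨hw, h⟩)
  rw [diracElem_mul_self, Real.sq_sqrt (by positivity)]
  push_cast
  rfl

theorem diracSymbol_eq_diracElem (p : EuclideanSpace ℝ (Fin 3)) :
    diracSymbol p = diracElem p 1 := by
  simp [diracSymbol, diracElem]

theorem shiftedSymbolEps_eq_diracElem (C ε : ℝ) (p : EuclideanSpace ℝ (Fin 3)) :
    shiftedSymbolEps C ε p =
      diracElem p (1 + ((C - ε * ‖p‖) / 2 : ℝ)) + (((C - ε * ‖p‖) / 2 : ℝ) : ℂ) • 1 := by
  simp only [shiftedSymbolEps, diracSymbol, diracElem, smul_add, add_smul, one_smul]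
  abel

theorem avgResolventSymbol_eq {C : ℝ} (hC : 0 ≤ C) (p : EuclideanSpace ℝ (Fin 3)) :
    avgResolventSymbol C p = ((‖p‖ ^ 2 + 1 + C : ℝ) : ℂ)⁻¹ • diracSymbol p := by
  set b : ℂ := I * Real.sqrt C
  have hdet : ((‖p‖ ^ 2 : ℝ) : ℂ) + 1 ^ 2 - b ^ 2 = ((‖p‖ ^ 2 + 1 + C : ℝ) : ℂ) := by
    rw [mul_pow, I_sq, ← ofReal_pow, Real.sq_sqrt hC]
    push_cast
    ring
  have hdet' : ((‖p‖ ^ 2 : ℝ) : ℂ) + 1 ^ 2 - (-b) ^ 2 = ((‖p‖ ^ 2 + 1 + C : ℝ) : ℂ) := by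
    rw [neg_sq, hdet]
  have hne : ((‖p‖ ^ 2 + 1 + C : ℝ) : ℂ) ≠ 0 := by exact_mod_cast (by positivity : (0 : ℝ) < _).ne'
  have hH := diracElem_mul_self p 1
  rw [avgResolventSymbol, diracSymbol_eq_diracElem, sub_eq_add_neg, ← neg_smul,
    (Matrix.inv_add_smul_one_of_mul_self hH (hdet ▸ hne)).2,
    (Matrix.inv_add_smul_one_of_mul_self hH (hdet' ▸ hne)).2, hdet, hdet']
  module

theorem isUnit_shiftedSymbolEps_and_inv {C ε : ℝ} (hC : 0 ≤ C) (hε1 : ε ≤ 1)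
    (p : EuclideanSpace ℝ (Fin 3)) :
    IsUnit (shiftedSymbolEps C ε p) ∧
      (shiftedSymbolEps C ε p)⁻¹ = ((‖p‖ ^ 2 + 1 + C - ε * ‖p‖ : ℝ) : ℂ)⁻¹ •
        (diracElem p (1 + ((C - ε * ‖p‖) / 2 : ℝ)) - (((C - ε * ‖p‖) / 2 : ℝ) : ℂ) • 1) := by
  have hpos : 0 < ‖p‖ ^ 2 + 1 + C - ε * ‖p‖ := by
    nlinarith [mul_le_mul_of_nonneg_right hε1 (norm_nonneg p), sq_nonneg (‖p‖ - 1)]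
  set k : ℂ := (((C - ε * ‖p‖) / 2 : ℝ) : ℂ)
  have hdet :
      ((‖p‖ ^ 2 : ℝ) : ℂ) + (1 + k) ^ 2 - k ^ 2 = ((‖p‖ ^ 2 + 1 + C - ε * ‖p‖ : ℝ) : ℂ) := by
    simp only [k]
    push_cast
    ring
  rw [shiftedSymbolEps_eq_diracElem, ← hdet]
  exact Matrix.inv_add_smul_one_of_mul_self (diracElem_mul_self _ _)
    (by rw [hdet]; exact_mod_cast hpos.ne')

theorem sq_add_sq_le_sq_of_bounds {ε q x y R : ℝ} (hε : 0 ≤ ε) (hx : x ≤ 0)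
    (hx2 : x ^ 2 * (q ^ 2 + 1) ≤ 4 * ε ^ 2) (hy : -ε ≤ y) (hR : 8 * ε ≤ R) :
    0 ≤ R + y ∧ x ^ 2 * q ^ 2 + (x - y) ^ 2 ≤ (R + y) ^ 2 := by
  have hxε : -x ≤ 2 * ε := by nlinarith [sq_nonneg q]
  refine ⟨by linarith, ?_⟩
  -- `(R + y)² - x²q² - (x - y)² = R² - x²(q² + 1) + 2y(R + x)`
  nlinarith [mul_le_mul_of_nonneg_right hy (by linarith : 0 ≤ R + x)]

theorem resolvent_coeff_bounds {C ε q u κ : ℝ} (hC : 0 ≤ C) (hε0 : 0 ≤ ε) (hε1 : ε ≤ 1)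
    (hq : 0 < q) (hu : u = (q ^ 2 + 1 + C)⁻¹ - (q ^ 2 + 1 + C - ε * q)⁻¹)
    (hκ : κ = (C - ε * q) / 2 / (q ^ 2 + 1 + C - ε * q)) :
    u * q ≤ 0 ∧ (u * q) ^ 2 * (q ^ 2 + 1) ≤ 4 * ε ^ 2 ∧ -ε ≤ κ * q := by
  set s := q ^ 2 + 1
  set d₁ := s + C
  set d₂ := s + C - ε * q
  have hs : 2 * q ≤ s := by nlinarith [sq_nonneg (q - 1)]
  have hs₁ : 1 ≤ s := by nlinarith
  have hd₁ : s ≤ d₁ := by linarith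
  have hd₂ : s / 2 ≤ d₂ := by nlinarith
  have hd₁0 : 0 < d₁ := by linarith
  have hd₂0 : 0 < d₂ := by linarith
  have huq : u * q = -(ε * q ^ 2) / (d₁ * d₂) := by
    rw [hu, inv_sub_inv hd₁0.ne' hd₂0.ne', div_mul_eq_mul_div]
    congr 1
    ring
  have hd : s ^ 2 ≤ 2 * (d₁ * d₂) := by nlinarith
  have hq4 : q ^ 4 * s ≤ s ^ 4 :=
    calc q ^ 4 * s = (q ^ 2) ^ 2 * s := by ring
      _ ≤ s ^ 2 * s ^ 2 := by gcongr <;> nlinarith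
      _ = s ^ 4 := by ring
  refine ⟨?_, ?_, ?_⟩
  · rw [huq]
    exact div_nonpos_of_nonpos_of_nonneg (by nlinarith) (by positivity)
  · rw [huq, div_pow, div_mul_eq_mul_div, div_le_iff₀ (by positivity)]
    have := pow_le_pow_left₀ (by positivity) hd 2
    nlinarith [mul_le_mul_of_nonneg_left hq4 (sq_nonneg ε)]
  · rw [hκ, div_div, div_mul_eq_mul_div, le_div_iff₀ (by positivity)]
    nlinarith

theorem resolvent_coeff_sq_le {C ε q u κ : ℝ} (hC : 0 ≤ C) (hε0 : 0 ≤ ε) (hε1 : ε ≤ 1)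
    (hq : 0 < q) (hu : u = (q ^ 2 + 1 + C)⁻¹ - (q ^ 2 + 1 + C - ε * q)⁻¹)
    (hκ : κ = (C - ε * q) / 2 / (q ^ 2 + 1 + C - ε * q)) :
    0 ≤ 8 * ε * (1 + C) / q + κ ∧
      u ^ 2 * q ^ 2 + (u - κ) ^ 2 ≤ (8 * ε * (1 + C) / q + κ) ^ 2 := by
  obtain ⟨h1, h2, h3⟩ := resolvent_coeff_bounds hC hε0 hε1 hq hu hκ
  obtain ⟨hpos, hsq⟩ :=
    sq_add_sq_le_sq_of_bounds (R := 8 * ε * (1 + C)) hε0 h1 h2 h3 (by nlinarith)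
  have hr : 8 * ε * (1 + C) / q + κ = (8 * ε * (1 + C) + κ * q) / q := by field_simp
  have hl :
      u ^ 2 * q ^ 2 + (u - κ) ^ 2 = ((u * q) ^ 2 * q ^ 2 + (u * q - κ * q) ^ 2) / q ^ 2 := by
    field_simp
  rw [hr, hl, div_pow]
  exact ⟨div_nonneg hpos hq.le, div_le_div_of_nonneg_right hsq (by positivity)⟩

theorem avgResolventSymbol_add_sub_inv_eq {C ε r u κ : ℝ} (hC : 0 ≤ C) (hε1 : ε ≤ 1)
    (p : EuclideanSpace ℝ (Fin 3))
    (hu : u = (‖p‖ ^ 2 + 1 + C)⁻¹ - (‖p‖ ^ 2 + 1 + C - ε * ‖p‖)⁻¹)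
    (hκ : κ = (C - ε * ‖p‖) / 2 / (‖p‖ ^ 2 + 1 + C - ε * ‖p‖)) :
    avgResolventSymbol C p + (r : ℂ) • 1 - (shiftedSymbolEps C ε p)⁻¹ =
      diracElem (u • p) (u - κ : ℝ) + ((r + κ : ℝ) : ℂ) • 1 := by
  have hH : diracElem (u • p) (u - κ : ℝ) =
      (((‖p‖ ^ 2 + 1 + C)⁻¹ : ℝ) : ℂ) • diracElem p 1 -
        (((‖p‖ ^ 2 + 1 + C - ε * ‖p‖)⁻¹ : ℝ) : ℂ) •
          diracElem p (1 + ((C - ε * ‖p‖) / 2 : ℝ)) := by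
    rw [ofReal_smul_diracElem, ofReal_smul_diracElem, diracElem_sub_diracElem, hu, hκ, sub_smul]
    congr 1
    push_cast
    ring
  rw [avgResolventSymbol_eq hC, (isUnit_shiftedSymbolEps_and_inv hC hε1 p).2,
    diracSymbol_eq_diracElem, hH, hκ]
  push_cast
  module

/-- **Lemma 10.**  For `0 ≤ ε ≤ 1` and `C ≥ 0`, the operator `D₀ + ((C-ε|p|)/2)(β+1)` is
invertible and `(D₀ + ((C-ε|p|)/2)(β+1))⁻¹ ≤ (1/2)[(α·p+β+i√C)⁻¹ + (α·p+β−i√C)⁻¹]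
+ 8ε(1+C)/|p|`, expressed through the Fourier symbols at every momentum `p`. -/
theorem stmt_13 (C ε : ℝ) (hC : 0 ≤ C) (hε0 : 0 ≤ ε) (hε1 : ε ≤ 1)
    (p : EuclideanSpace ℝ (Fin 3)) :
    IsUnit (shiftedSymbolEps C ε p) ∧
      (p ≠ 0 →
        (avgResolventSymbol C p + ((8 * ε * (1 + C) / ‖p‖ : ℝ) : ℂ) • 1 -
          (shiftedSymbolEps C ε p)⁻¹).PosSemidef) := by
  refine ⟨(isUnit_shiftedSymbolEps_and_inv hC hε1 p).1, fun hp => ?_⟩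
  obtain ⟨hw, hsq⟩ := resolvent_coeff_sq_le hC hε0 hε1 (norm_pos_iff.2 hp) rfl rfl
  rw [avgResolventSymbol_add_sub_inv_eq hC hε1 p rfl rfl]
  refine diracElem_add_smul_one_posSemidef _ hw ?_
  rwa [norm_smul, mul_pow, Real.norm_eq_abs, sq_abs]
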